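/- Aubin continuity of the solution mapping. Let P, X, Y be metric spaces, F: P×X ⇉ Y a set-valued mapping with nonempty values, C ⊆ Y a nonempty closed set, and (p̄,x̄) ∈ P×X. Suppose: (i) X is metrically complete; (ii) x̄ ∈ Solv(p̄); (iii) p ↦ ν_{F,C}(p,x̄) is upper semicontinuous at p̄; (iv) there exists δ₁ > 0 such that for every p ∈ B(p̄,δ₁) the mapping x ↦ F(p,x) is l.s.c. on X; (v) there exists δ₂ > 0 such that σ∇ = inf{ |∇ₓν_{F,C}|(p,x) : (p,x) ∈ B(p̄,δ₂)×B(x̄,δ₂), F(p,x) ⊄ C } > 0; (vi) there exist τ, s, ℓ > 0 such that for every x ∈ B(x̄,s) the mapping p ↦ F(p,x) is Lipschitz continuous with rate ℓ on B(p̄,τ) with respect to the Pompeiu–Hausdorff distance. Then p̄ belongs to the interior of dom Solv, Solv is Aubin continuous at (p̄,x̄), and lip Solv(p̄,x̄) ≤ ℓ/σ∇. -/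

import Mathlib

/-!
Fix `σ' < σ∇` and take `x ∈ Solv p₂` near `x̄`. Lipschitz continuity in `p` gives
`ν(p₁, x) ≤ ℓ d(p₁, p₂)`. Ekeland's variational principle for the lower semicontinuous function
`ν(p₁, ·)` with rate `σ'` yields a point `z` with `σ' d(z, x) ≤ ν(p₁, x)` at which every other
point decreases `ν(p₁, ·)` by less than `σ'` times its distance, so the slope at `z` is at most
`σ'`.
For `p₁, p₂` close to `p̄` the point `z` stays where the slopes of non-solutions exceed `σ'`, hence
`z ∈ Solv p₁` and `dist(x, Solv p₁) ≤ (ℓ / σ') d(p₁, p₂)`. Letting `σ' → σ∇` bounds the modulus.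
-/

open Classical Metric Filter Set
open scoped ENNReal Topology

/-- Excess of `A` over `C`: `e(A,C) = sup_{a ∈ A} dist(a,C)`. -/
noncomputable def exc {Y : Type*} [PseudoEMetricSpace Y] (A C : Set Y) : ℝ≥0∞ :=
  ⨆ y ∈ A, EMetric.infEdist y C

/-- Partial strong slope with respect to `x` of `ν : P × X → [0,∞]`. -/
noncomputable def slopeX {P X : Type*} [PseudoMetricSpace P] [PseudoMetricSpace X]
    (ν : P → X → ℝ≥0∞) (p0 : P) (x0 : X) : ℝ≥0∞ :=
  if IsLocalMin (fun q : P × X => ν q.1 q.2) (p0, x0) then 0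
  else Filter.limsup (fun x => (ν p0 x0 - ν p0 x) / edist x x0) (𝓝[≠] x0)

/-- A set-valued mapping `Φ` is l.s.c. at `x0`. -/
def SVLscAt {X Y : Type*} [PseudoMetricSpace X] [TopologicalSpace Y]
    (Φ : X → Set Y) (x0 : X) : Prop :=
  ∀ V : Set Y, IsOpen V → (Φ x0 ∩ V).Nonempty →
    ∃ δ > (0:ℝ), ∀ x ∈ closedBall x0 δ, (Φ x ∩ V).Nonempty

/-- `Φ : P ⇉ X` is Aubin continuous at `(pbar,xbar)` with rate `κ > 0`. -/
def AubinWith {P X : Type*} [PseudoMetricSpace P] [PseudoMetricSpace X]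
    (Φ : P → Set X) (pbar : P) (xbar : X) (κ : ℝ) : Prop :=
  0 < κ ∧ ∃ δ > (0:ℝ), ∃ r > (0:ℝ), ∀ p₁ ∈ closedBall pbar δ, ∀ p₂ ∈ closedBall pbar δ,
    ∀ x ∈ Φ p₂ ∩ closedBall xbar r,
      EMetric.infEdist x (Φ p₁) ≤ ENNReal.ofReal (κ * dist p₁ p₂)

/-- Modulus of Aubin continuity: the infimum of the admissible rates. -/
noncomputable def aubinMod {P X : Type*} [PseudoMetricSpace P] [PseudoMetricSpace X]
    (Φ : P → Set X) (pbar : P) (xbar : X) : ℝ≥0∞ :=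
  ⨅ κ ∈ {κ : ℝ | AubinWith Φ pbar xbar κ}, ENNReal.ofReal κ

section Ekeland

variable {X : Type*}

lemma exists_le_biInf_add {f : X → ℝ≥0∞} {s : Set X} (hs : s.Nonempty) {ε : ℝ≥0∞} (hε : ε ≠ 0) :
    ∃ y ∈ s, f y ≤ (⨅ z ∈ s, f z) + ε := by
  by_cases htop : ⨅ z ∈ s, f z = ∞
  · obtain ⟨y, hy⟩ := hs
    exact ⟨y, hy, by simp [htop]⟩
  · obtain ⟨y, hy, hlt⟩ : ∃ y ∈ s, f y < (⨅ z ∈ s, f z) + ε := by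
      simpa only [iInf_lt_iff, exists_prop] using ENNReal.lt_add_right htop hε
    exact ⟨y, hy, hlt.le⟩

variable [PseudoEMetricSpace X]

def ekelandSet (f : X → ℝ≥0∞) (σ : ℝ≥0∞) (x : X) : Set X :=
  {y | f y + σ * edist y x ≤ f x}

variable {f : X → ℝ≥0∞} {σ : ℝ≥0∞} {x y : X}

lemma self_mem_ekelandSet (x : X) : x ∈ ekelandSet f σ x := by
  simp [ekelandSet]

lemma le_of_mem_ekelandSet (h : y ∈ ekelandSet f σ x) : f y ≤ f x :=
  le_self_add.trans h

lemma ekelandSet_subset_of_mem (h : y ∈ ekelandSet f σ x) :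
    ekelandSet f σ y ⊆ ekelandSet f σ x := fun z hz =>
  calc f z + σ * edist z x ≤ f z + σ * (edist z y + edist y x) := by
        gcongr; exact edist_triangle _ _ _
    _ = (f z + σ * edist z y) + σ * edist y x := by ring
    _ ≤ f y + σ * edist y x := by gcongr; exact hz
    _ ≤ f x := h

lemma isClosed_ekelandSet (hf : LowerSemicontinuous f) (hσ : σ ≠ ∞) (x : X) :
    IsClosed (ekelandSet f σ x) :=
  (hf.add ((ENNReal.continuous_const_mul hσ).comp
    (continuous_id.edist continuous_const)).lowerSemicontinuous).isClosed_preimage (f x)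

lemma edist_le_of_mem_ekelandSet (hσ0 : σ ≠ 0) (hσ : σ ≠ ∞) {ε : ℝ≥0∞} {z : X}
    (hx : f x ≤ (⨅ w ∈ ekelandSet f σ y, f w) + ε) (hxy : ekelandSet f σ x ⊆ ekelandSet f σ y)
    (hxfin : f x ≠ ∞) (hz : z ∈ ekelandSet f σ x) : edist z x ≤ σ⁻¹ * ε := by
  have hzfin : f z ≠ ∞ := ne_top_of_le_ne_top hxfin (le_of_mem_ekelandSet hz)
  have hfx : f x ≤ f z + ε := hx.trans (by gcongr; exact biInf_le _ (hxy hz))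
  exact (ENNReal.mul_le_iff_le_inv hσ0 hσ).1 ((ENNReal.add_le_add_iff_left hzfin).1 (hz.trans hfx))

end Ekeland

theorem ekeland_variational_principle {X : Type*} [EMetricSpace X] [CompleteSpace X]
    {f : X → ℝ≥0∞} (hf : LowerSemicontinuous f) {σ : ℝ≥0∞} (hσ0 : σ ≠ 0) (hσ : σ ≠ ∞)
    {x₀ : X} (hx₀ : f x₀ ≠ ∞) :
    ∃ z ∈ ekelandSet f σ x₀, ∀ x ∈ ekelandSet f σ z, x = z := by
  choose g hg_mem hg_le using fun (n : ℕ) (x : X) =>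
    exists_le_biInf_add (f := f) ⟨x, self_mem_ekelandSet (σ := σ) x⟩
      (by simp : ((2 : ℝ≥0∞) ^ n)⁻¹ ≠ 0)
  let u : ℕ → X := fun n => Nat.rec x₀ g n
  have hu_succ (n : ℕ) : u (n + 1) ∈ ekelandSet f σ (u n) := hg_mem n (u n)
  have hu_anti : Antitone fun n => ekelandSet f σ (u n) :=
    antitone_nat_of_succ_le fun n => ekelandSet_subset_of_mem (hu_succ n)
  have hu_fin (n : ℕ) : f (u n) ≠ ∞ :=
    ne_top_of_le_ne_top hx₀ (le_of_mem_ekelandSet (hu_anti n.zero_le (self_mem_ekelandSet _)))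
  have hsmall (n : ℕ) {y : X} (hy : y ∈ ekelandSet f σ (u (n + 1))) :
      edist y (u (n + 1)) ≤ σ⁻¹ / 2 ^ n :=
    div_eq_mul_inv σ⁻¹ (2 ^ n) ▸
      edist_le_of_mem_ekelandSet hσ0 hσ (hg_le n (u n)) (hu_anti n.le_succ) (hu_fin (n + 1)) hy
  have hcauchy : CauchySeq fun n => u (n + 1) :=
    cauchySeq_of_edist_le_geometric_two σ⁻¹ (ENNReal.inv_ne_top.2 hσ0) fun n => by
      rw [edist_comm]; exact hsmall n (hu_succ (n + 1))
  obtain ⟨z, hz⟩ := cauchySeq_tendsto_of_complete hcauchy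
  have hz_mem (n : ℕ) : z ∈ ekelandSet f σ (u n) :=
    (isClosed_ekelandSet hf hσ _).mem_of_tendsto hz
      (eventually_atTop.2 ⟨n, fun m hm => hu_anti hm (hu_succ m)⟩)
  refine ⟨z, hz_mem 0, fun x hx => tendsto_nhds_unique ?_ hz⟩
  have hx_mem (n : ℕ) : x ∈ ekelandSet f σ (u (n + 1)) :=
    ekelandSet_subset_of_mem (hz_mem (n + 1)) hx
  have hgeom : Tendsto (fun n : ℕ => σ⁻¹ / 2 ^ n) atTop (𝓝 0) := by
    simpa using ENNReal.Tendsto.const_div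
      (ENNReal.tendsto_pow_atTop_nhds_top_iff.2 (by norm_num)) (Or.inr (ENNReal.inv_ne_top.2 hσ0))
  refine tendsto_iff_edist_tendsto_0.2 (tendsto_of_tendsto_of_tendsto_of_le_of_le
    tendsto_const_nhds hgeom (fun _ => zero_le) fun n => ?_)
  rw [edist_comm]
  exact hsmall n (hx_mem n)

section SetValued

variable {P X Y : Type*} [PseudoMetricSpace P]

lemma exc_le_hausdorffEDist_of_subset [PseudoEMetricSpace Y] {A B C : Set Y} (hBC : B ⊆ C) :
    exc A C ≤ hausdorffEDist A B :=
  iSup₂_le fun _ hy => (infEDist_anti hBC).trans (infEDist_le_hausdorffEDist_of_mem hy)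

lemma SVLscAt.lowerSemicontinuousAt_exc [PseudoMetricSpace X] [PseudoEMetricSpace Y]
    {Φ : X → Set Y} {x : X} (h : SVLscAt Φ x) (C : Set Y) :
    LowerSemicontinuousAt (fun x => exc (Φ x) C) x := by
  intro b hb
  obtain ⟨y, hy, hby⟩ := lt_biSup_iff.1 hb
  obtain ⟨δ, hδ, hδΦ⟩ := h _ (isOpen_lt continuous_const continuous_infEDist) ⟨y, hy, hby⟩
  filter_upwards [closedBall_mem_nhds x hδ] with x' hx'
  obtain ⟨y', hy', hby'⟩ := hδΦ x' hx'
  exact hby'.trans_le (le_iSup₂ (f := fun y _ => infEDist y C) y' hy')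

lemma AubinWith.mem_interior_dom [PseudoMetricSpace X] {Φ : P → Set X} {pbar : P} {xbar : X}
    {κ : ℝ} (h : AubinWith Φ pbar xbar κ) (hx : xbar ∈ Φ pbar) :
    pbar ∈ interior {p | (Φ p).Nonempty} := by
  obtain ⟨-, δ, hδ, r, hr, H⟩ := h
  refine mem_interior.2 ⟨ball pbar δ, fun p hp => ?_, isOpen_ball, mem_ball_self hδ⟩
  by_contra hempty
  have hdist : infEDist xbar (Φ p) ≤ ENNReal.ofReal (κ * dist p pbar) :=
    H p (ball_subset_closedBall hp) pbar (mem_closedBall_self hδ.le) xbar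
      ⟨hx, mem_closedBall_self hr.le⟩
  rw [not_nonempty_iff_eq_empty.1 hempty, infEDist_empty] at hdist
  exact ENNReal.ofReal_ne_top (top_le_iff.1 hdist)

lemma aubinMod_le_div [PseudoMetricSpace X] {Φ : P → Set X} {pbar : P} {xbar : X} {ℓ : ℝ}
    (hℓ : 0 < ℓ) {σ : ℝ≥0∞} (hσ : σ ≠ 0)
    (h : ∀ σ' : ℝ, 0 < σ' → ENNReal.ofReal σ' < σ → AubinWith Φ pbar xbar (ℓ / σ')) :
    aubinMod Φ pbar xbar ≤ ENNReal.ofReal ℓ / σ := by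
  by_contra hlt
  obtain ⟨κ, -, hκ, hκmod⟩ := ENNReal.lt_iff_exists_real_btwn.1 (not_le.1 hlt)
  have hκ0 : 0 < κ := ENNReal.ofReal_pos.1 (lt_of_le_of_lt zero_le hκ)
  have hσ' : ENNReal.ofReal (ℓ / κ) < σ := by
    rw [ENNReal.ofReal_div_of_pos hκ0]
    exact ENNReal.div_lt_of_lt_mul'
      ((ENNReal.div_lt_iff (Or.inl hσ) (Or.inr ENNReal.ofReal_ne_top)).1 hκ)
  have hmod : aubinMod Φ pbar xbar ≤ ENNReal.ofReal κ := by
    have := h (ℓ / κ) (by positivity) hσ'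
    rw [div_div_cancel₀ hℓ.ne'] at this
    exact iInf₂_le κ this
  exact hκmod.not_ge hmod

end SetValued

lemma slopeX_le_of_forall_mem_ekelandSet_eq {P X : Type*} [PseudoMetricSpace P]
    [PseudoMetricSpace X] {ν : P → X → ℝ≥0∞} {p : P} {z : X} {σ : ℝ≥0∞}
    (hz : ∀ x ∈ ekelandSet (ν p) σ z, x = z) : slopeX ν p z ≤ σ := by
  unfold slopeX
  split_ifs
  · exact zero_le
  refine limsup_le_of_le (by isBoundedDefault) ?_
  filter_upwards [self_mem_nhdsWithin] with x (hxz : x ≠ z)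
  refine ENNReal.div_le_of_le_mul (tsub_le_iff_right.2 ?_)
  rw [add_comm]
  exact (not_le.1 (mt (hz x) hxz)).le

lemma exists_mem_edist_le_of_lt_slopeX {P X : Type*} [PseudoMetricSpace P] [MetricSpace X]
    [CompleteSpace X] {ν : P → X → ℝ≥0∞} {p : P}
    (hν : LowerSemicontinuous (ν p)) {S B : Set X} {σ a : ℝ} (hσ : 0 < σ) (ha : 0 ≤ a)
    (hslope : ∀ x ∈ B, x ∉ S → ENNReal.ofReal σ < slopeX ν p x) {x₀ : X}
    (hB : closedBall x₀ a ⊆ B) (hx₀ : ν p x₀ ≤ ENNReal.ofReal (σ * a)) :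
    ∃ z ∈ S, edist z x₀ ≤ ν p x₀ / ENNReal.ofReal σ := by
  have hσ0 : ENNReal.ofReal σ ≠ 0 := (ENNReal.ofReal_pos.2 hσ).ne'
  obtain ⟨z, hz₀, hz⟩ := ekeland_variational_principle hν hσ0 ENNReal.ofReal_ne_top
    (ne_top_of_le_ne_top ENNReal.ofReal_ne_top hx₀)
  have hzx : edist z x₀ ≤ ν p x₀ / ENNReal.ofReal σ :=
    (ENNReal.le_div_iff_mul_le (Or.inl hσ0) (Or.inl ENNReal.ofReal_ne_top)).2
      (by rw [mul_comm]; exact le_add_self.trans hz₀)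
  refine ⟨z, by_contra fun hzS => ?_, hzx⟩
  have hzB : z ∈ B := hB <| (edist_le_ofReal ha).1 <|
    calc edist z x₀ ≤ ν p x₀ / ENNReal.ofReal σ := hzx
      _ ≤ ENNReal.ofReal (σ * a) / ENNReal.ofReal σ := by gcongr
      _ = ENNReal.ofReal a := by
        rw [ENNReal.ofReal_mul hσ.le, mul_comm,
          ENNReal.mul_div_cancel_right hσ0 ENNReal.ofReal_ne_top]
  exact (hslope z hzB hzS).not_ge (slopeX_le_of_forall_mem_ekelandSet_eq hz)

theorem aubinWith_solv {P X Y : Type*} [PseudoMetricSpace P] [MetricSpace X] [CompleteSpace X]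
    [PseudoEMetricSpace Y] {F : P → X → Set Y} {C : Set Y} {pbar : P} {xbar : X}
    {δ₁ δ₂ τ s ℓ σ : ℝ} (hδ₁ : 0 < δ₁) (hδ₂ : 0 < δ₂) (hτ : 0 < τ) (hs : 0 < s) (hℓ : 0 < ℓ)
    (hσ : 0 < σ) (hlsc : ∀ p ∈ closedBall pbar δ₁, ∀ x, SVLscAt (F p) x)
    (hslope : ∀ p ∈ closedBall pbar δ₂, ∀ x ∈ closedBall xbar δ₂, ¬ F p x ⊆ C →
      ENNReal.ofReal σ < slopeX (fun p x => exc (F p x) C) p x)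
    (hlip : ∀ x ∈ closedBall xbar s, ∀ p₁ ∈ closedBall pbar τ, ∀ p₂ ∈ closedBall pbar τ,
      hausdorffEDist (F p₁ x) (F p₂ x) ≤ ENNReal.ofReal (ℓ * dist p₁ p₂)) :
    AubinWith (fun p => {x | F p x ⊆ C}) pbar xbar (ℓ / σ) := by
  set r := min s (δ₂ / 2)
  -- `δ` makes `ℓ * dist p₁ p₂ ≤ σ * (δ₂ / 2)`, so the Ekeland point stays in the `δ₂`-ball.
  set δ := min (min δ₁ δ₂) (min τ (σ * δ₂ / (4 * ℓ)))
  have hr : 0 < r := lt_min hs (half_pos hδ₂)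
  have hδ : 0 < δ := lt_min (lt_min hδ₁ hδ₂) (lt_min hτ (by positivity))
  refine ⟨div_pos hℓ hσ, δ, hδ, r, hr, fun p₁ hp₁ p₂ hp₂ x ⟨hx, hxr⟩ => ?_⟩
  have hδδ₁ : δ ≤ δ₁ := (min_le_left _ _).trans (min_le_left _ _)
  have hδδ₂ : δ ≤ δ₂ := (min_le_left _ _).trans (min_le_right _ _)
  have hδτ : δ ≤ τ := (min_le_right _ _).trans (min_le_left _ _)
  have hdist : ℓ * dist p₁ p₂ ≤ σ * (δ₂ / 2) := by
    have hδσ : δ ≤ σ * δ₂ / (4 * ℓ) := (min_le_right _ _).trans (min_le_right _ _)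
    have h12 : dist p₁ p₂ ≤ 2 * δ := (dist_triangle_right p₁ p₂ pbar).trans <| by
      linarith [mem_closedBall.1 hp₁, mem_closedBall.1 hp₂]
    calc ℓ * dist p₁ p₂ ≤ ℓ * (2 * (σ * δ₂ / (4 * ℓ))) := by gcongr; linarith
      _ = σ * (δ₂ / 2) := by field_simp; ring
  have hexc : exc (F p₁ x) C ≤ ENNReal.ofReal (ℓ * dist p₁ p₂) :=
    (exc_le_hausdorffEDist_of_subset hx).trans <|
      hlip x (closedBall_subset_closedBall (min_le_left _ _) hxr)
        p₁ (closedBall_subset_closedBall hδτ hp₁) p₂ (closedBall_subset_closedBall hδτ hp₂)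
  have hball : closedBall x (δ₂ / 2) ⊆ closedBall xbar δ₂ :=
    closedBall_subset_closedBall' (by linarith [mem_closedBall.1 hxr, min_le_right s (δ₂ / 2)])
  obtain ⟨z, hz, hzx⟩ := exists_mem_edist_le_of_lt_slopeX (ν := fun p x => exc (F p x) C)
    (fun x => (hlsc p₁ (closedBall_subset_closedBall hδδ₁ hp₁) x).lowerSemicontinuousAt_exc C)
    hσ (half_pos hδ₂).le
    (fun x hx hxS => hslope p₁ (closedBall_subset_closedBall hδδ₂ hp₁) x hx hxS)
    hball (hexc.trans (ENNReal.ofReal_le_ofReal hdist))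
  calc infEDist x {x | F p₁ x ⊆ C} ≤ edist x z := infEDist_le_edist_of_mem hz
    _ ≤ exc (F p₁ x) C / ENNReal.ofReal σ := by rw [edist_comm]; exact hzx
    _ ≤ ENNReal.ofReal (ℓ * dist p₁ p₂) / ENNReal.ofReal σ := by gcongr
    _ = ENNReal.ofReal (ℓ / σ * dist p₁ p₂) := by
      rw [← ENNReal.ofReal_div_of_pos hσ, mul_div_right_comm]

theorem aubin_continuity_of_Solv_general
    {P X Y : Type*} [MetricSpace P] [MetricSpace X] [CompleteSpace X] [MetricSpace Y]
    (F : P → X → Set Y)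
    (C : Set Y)
    (pbar : P) (xbar : X)
    (hsol : F pbar xbar ⊆ C)
    (hlsc : ∃ δ₁ > (0:ℝ), ∀ p ∈ closedBall pbar δ₁, ∀ x : X, SVLscAt (F p) x)
    (δ₂ : ℝ) (hδ₂ : 0 < δ₂) (σ : ℝ≥0∞)
    (hσdef : σ = ⨅ q : {q : P × X // q.1 ∈ closedBall pbar δ₂ ∧ q.2 ∈ closedBall xbar δ₂ ∧
        ¬ F q.1 q.2 ⊆ C}, slopeX (fun p x => exc (F p x) C) q.val.1 q.val.2)
    (hσpos : 0 < σ)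
    (τ s ℓ : ℝ) (hτ : 0 < τ) (hs : 0 < s) (hℓ : 0 < ℓ)
    (hlip : ∀ x ∈ closedBall xbar s, ∀ p₁ ∈ closedBall pbar τ, ∀ p₂ ∈ closedBall pbar τ,
      EMetric.hausdorffEdist (F p₁ x) (F p₂ x) ≤ ENNReal.ofReal (ℓ * dist p₁ p₂)) :
    pbar ∈ interior {p : P | {x : X | F p x ⊆ C}.Nonempty} ∧
    (∃ κ : ℝ, AubinWith (fun p => {x : X | F p x ⊆ C}) pbar xbar κ) ∧
    aubinMod (fun p => {x : X | F p x ⊆ C}) pbar xbar ≤ ENNReal.ofReal ℓ / σ := by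
  obtain ⟨δ₁, hδ₁, hlsc⟩ := hlsc
  have hslope : ∀ p ∈ closedBall pbar δ₂, ∀ x ∈ closedBall xbar δ₂, ¬ F p x ⊆ C →
      σ ≤ slopeX (fun p x => exc (F p x) C) p x :=
    fun p hp x hx hpx => hσdef ▸ iInf_le_of_le ⟨(p, x), hp, hx, hpx⟩ le_rfl
  have haubin (σ' : ℝ) (hσ'0 : 0 < σ') (hσ' : ENNReal.ofReal σ' < σ) :
      AubinWith (fun p => {x | F p x ⊆ C}) pbar xbar (ℓ / σ') :=
    aubinWith_solv hδ₁ hδ₂ hτ hs hℓ hσ'0 hlsc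
      (fun p hp x hx hpx => hσ'.trans_le (hslope p hp x hx hpx)) hlip
  obtain ⟨σ', -, hσ'0, hσ'⟩ := ENNReal.lt_iff_exists_real_btwn.1 hσpos
  have hσ'aubin := haubin σ' (ENNReal.ofReal_pos.1 hσ'0) hσ'
  exact ⟨hσ'aubin.mem_interior_dom hsol, ⟨_, hσ'aubin⟩, aubinMod_le_div hℓ hσpos.ne' haubin⟩

/-- **Aubin continuity of the solution mapping** `Solv(p) = {x : F(p,x) ⊆ C}`. -/
theorem aubin_continuity_of_Solv
    {P X Y : Type*} [MetricSpace P] [MetricSpace X] [CompleteSpace X] [MetricSpace Y]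
    (F : P → X → Set Y) (hFne : ∀ p x, (F p x).Nonempty)
    (C : Set Y) (hCne : C.Nonempty) (hCclosed : IsClosed C)
    (pbar : P) (xbar : X)
    (hsol : F pbar xbar ⊆ C)
    (husc : UpperSemicontinuousAt (fun p => exc (F p xbar) C) pbar)
    (hlsc : ∃ δ₁ > (0:ℝ), ∀ p ∈ closedBall pbar δ₁, ∀ x : X, SVLscAt (F p) x)
    (δ₂ : ℝ) (hδ₂ : 0 < δ₂) (σ : ℝ≥0∞)
    (hσdef : σ = ⨅ q : {q : P × X // q.1 ∈ closedBall pbar δ₂ ∧ q.2 ∈ closedBall xbar δ₂ ∧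
        ¬ F q.1 q.2 ⊆ C}, slopeX (fun p x => exc (F p x) C) q.val.1 q.val.2)
    (hσpos : 0 < σ)
    (τ s ℓ : ℝ) (hτ : 0 < τ) (hs : 0 < s) (hℓ : 0 < ℓ)
    (hlip : ∀ x ∈ closedBall xbar s, ∀ p₁ ∈ closedBall pbar τ, ∀ p₂ ∈ closedBall pbar τ,
      EMetric.hausdorffEdist (F p₁ x) (F p₂ x) ≤ ENNReal.ofReal (ℓ * dist p₁ p₂)) :
    pbar ∈ interior {p : P | {x : X | F p x ⊆ C}.Nonempty} ∧
    (∃ κ : ℝ, AubinWith (fun p => {x : X | F p x ⊆ C}) pbar xbar κ) ∧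
    aubinMod (fun p => {x : X | F p x ⊆ C}) pbar xbar ≤ ENNReal.ofReal ℓ / σ :=
  aubin_continuity_of_Solv_general F C pbar xbar hsol hlsc δ₂ hδ₂ σ hσdef hσpos τ s ℓ hτ hs hℓ hlip
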